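/- Let φ be the baker map and C_j = [a_j, b_j) × [c_j, d_j) ⊆ [0,1)² with a_j = c_j = 0. For the initial probability measure P with uniform density 1/μ_L[C_j] on C_j, the occupation probability satisfies p_j(n) := P[φ^{-n}(C_j)] ≤ 1/2ⁿ for all n with 2ⁿ d_j < 1; more precisely, p_j(n) = (1/2ⁿ)·ϑ(b_j − 2ⁿ a_j)·ϑ(d_j − 2ⁿ c_j)/((b_j − a_j)(d_j − c_j)) where ϑ(x) = max(x, 0), for n < log₂(1/d_j). -/

import Mathlib

open MeasureTheory Set

/-- The baker map on [0,1)². -/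
noncomputable def baker (p : ℝ × ℝ) : ℝ × ℝ :=
  if p.1 < 1 / 2 then (2 * p.1, p.2 / 2) else (2 * p.1 - 1, p.2 / 2 + 1 / 2)

/-!
The right branch of the baker map adds `1/2` to the second coordinate, which the remaining
iterations halve at most `n - 1` times. So a point `(x, y)` with `x, y ≥ 0` whose `n`-th image
has second coordinate below `2⁻ⁿ` took the left branch every time, and then
`φⁿ (x, y) = (2ⁿ x, y / 2ⁿ)`. Since `2ⁿ d < 1`, this identifies `φ⁻ⁿ(C) ∩ C` with the rectangle
`[0, b / 2ⁿ) × [0, d)`, whose measure is `μ_L[C] / 2ⁿ`.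
-/

lemma baker_of_lt_half {x : ℝ} (y : ℝ) (h : x < 1 / 2) : baker (x, y) = (2 * x, y / 2) :=
  if_pos h

lemma baker_of_half_le {x : ℝ} (y : ℝ) (h : 1 / 2 ≤ x) :
    baker (x, y) = (2 * x - 1, y / 2 + 1 / 2) :=
  if_neg h.not_gt

lemma baker_iter_of_two_pow_mul_lt_one (n : ℕ) {x : ℝ} (y : ℝ) (hx : 0 ≤ x)
    (h : 2 ^ n * x < 1) : baker^[n] (x, y) = (2 ^ n * x, y / 2 ^ n) := by
  induction n generalizing x y with
  | zero => simp
  | succ n ih =>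
    have hx_half : x < 1 / 2 := by
      nlinarith [one_le_pow₀ (one_le_two (α := ℝ)) (n := n), pow_succ (2 : ℝ) n]
    rw [Function.iterate_succ_apply, baker_of_lt_half y hx_half,
      ih (y / 2) (by positivity) (by rw [pow_succ] at h; linarith)]
    simp only [Prod.mk.injEq, pow_succ]
    constructor <;> ring

lemma div_two_pow_le_snd_baker_iter (n : ℕ) (x : ℝ) {y : ℝ} (hy : 0 ≤ y) :
    y / 2 ^ n ≤ (baker^[n] (x, y)).2 := by
  induction n generalizing x y with
  | zero => simp
  | succ n ih =>
    have hy_div : y / 2 ^ (n + 1) = y / 2 / 2 ^ n := by rw [pow_succ]; ring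
    rw [Function.iterate_succ_apply, hy_div]
    rcases lt_or_ge x (1 / 2) with hx | hx
    · rw [baker_of_lt_half y hx]
      exact ih _ (by positivity)
    · rw [baker_of_half_le y hx]
      calc y / 2 / 2 ^ n ≤ (y / 2 + 1 / 2) / 2 ^ n := by gcongr; linarith
        _ ≤ _ := ih _ (by positivity)

lemma baker_iter_of_snd_lt (n : ℕ) {x y : ℝ} (hx : 0 ≤ x) (hy : 0 ≤ y)
    (h : (baker^[n] (x, y)).2 < 1 / 2 ^ n) : baker^[n] (x, y) = (2 ^ n * x, y / 2 ^ n) := by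
  induction n generalizing x y with
  | zero => simp
  | succ n ih =>
    rw [Function.iterate_succ_apply] at h ⊢
    rcases lt_or_ge x (1 / 2) with hx_half | hx_half
    · rw [baker_of_lt_half y hx_half] at h ⊢
      have h' : (baker^[n] (2 * x, y / 2)).2 < 1 / 2 ^ n :=
        h.trans_le (one_div_le_one_div_of_le (by positivity) (pow_le_pow_right₀ one_le_two n.le_succ))
      rw [ih (by positivity) (by positivity) h']
      simp only [Prod.mk.injEq, pow_succ]
      constructor <;> ring
    · rw [baker_of_half_le y hx_half] at h
      have hlow := div_two_pow_le_snd_baker_iter n (2 * x - 1) (y := y / 2 + 1 / 2) (by positivity)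
      have : (1 : ℝ) / 2 ^ (n + 1) ≤ (y / 2 + 1 / 2) / 2 ^ n := by
        rw [pow_succ, div_mul_eq_div_div_swap]; gcongr; linarith
      linarith

lemma baker_iter_preimage_inter_Ico_prod_Ico (n : ℕ) {b d : ℝ} (hb : b ≤ 1)
    (hn : (2 : ℝ) ^ n * d < 1) :
    baker^[n] ⁻¹' (Ico 0 b ×ˢ Ico 0 d) ∩ Ico 0 b ×ˢ Ico 0 d = Ico 0 (b / 2 ^ n) ×ˢ Ico 0 d := by
  have h2 : (0 : ℝ) < 2 ^ n := by positivity
  have h1 : (1 : ℝ) ≤ 2 ^ n := one_le_pow₀ one_le_two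
  ext ⟨x, y⟩
  simp only [mem_inter_iff, mem_preimage, mem_prod, mem_Ico, lt_div_iff₀ h2]
  constructor
  · rintro ⟨himage, ⟨hx0, -⟩, hy0, hyd⟩
    have hsnd : (baker^[n] (x, y)).2 < 1 / 2 ^ n := by
      rw [lt_div_iff₀ h2]; nlinarith [himage.2.2]
    rw [baker_iter_of_snd_lt n hx0 hy0 hsnd] at himage
    exact ⟨⟨hx0, by linarith [himage.1.2]⟩, hy0, hyd⟩
  · rintro ⟨⟨hx0, hxb⟩, hy0, hyd⟩
    rw [baker_iter_of_two_pow_mul_lt_one n y hx0 (by linarith)]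
    refine ⟨⟨⟨by positivity, by linarith⟩, by positivity, ?_⟩, ⟨hx0, by nlinarith⟩, hy0, hyd⟩
    exact (div_le_self hy0 h1).trans_lt hyd

lemma volume_Ico_prod_Ico_toReal {a b c d : ℝ} (hab : a ≤ b) (hcd : c ≤ d) :
    (volume (Ico a b ×ˢ Ico c d)).toReal = (b - a) * (d - c) := by
  rw [Measure.volume_eq_prod, Measure.prod_prod, Real.volume_Ico, Real.volume_Ico,
    ENNReal.toReal_mul, ENNReal.toReal_ofReal (sub_nonneg.2 hab),
    ENNReal.toReal_ofReal (sub_nonneg.2 hcd)]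

theorem baker_occupation_decay_general (n : ℕ) (b d : ℝ)
    (hb0 : 0 < b) (hb1 : b ≤ 1) (hd0 : 0 < d)
    (hn : (2 : ℝ) ^ n * d < 1)
    (C : Set (ℝ × ℝ)) (hC : C = Set.Ico (0 : ℝ) b ×ˢ Set.Ico (0 : ℝ) d) :
    (volume (baker^[n] ⁻¹' C ∩ C)).toReal / (volume C).toReal =
        (1 / 2 ^ n) * (max (b - 2 ^ n * 0) 0 * max (d - 2 ^ n * 0) 0) /
          ((b - 0) * (d - 0)) ∧
    (volume (baker^[n] ⁻¹' C ∩ C)).toReal / (volume C).toReal ≤ 1 / 2 ^ n := by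
  subst hC
  have h2 : (0 : ℝ) < 2 ^ n := by positivity
  have hratio : (volume (baker^[n] ⁻¹' (Ico 0 b ×ˢ Ico 0 d) ∩ Ico 0 b ×ˢ Ico 0 d)).toReal /
      (volume (Ico (0 : ℝ) b ×ˢ Ico (0 : ℝ) d)).toReal = 1 / 2 ^ n := by
    rw [baker_iter_preimage_inter_Ico_prod_Ico n hb1 hn,
      volume_Ico_prod_Ico_toReal (by positivity) hd0.le,
      volume_Ico_prod_Ico_toReal hb0.le hd0.le, sub_zero, sub_zero, sub_zero]
    field_simp
  rw [hratio, mul_zero, sub_zero, sub_zero, max_eq_left hb0.le, max_eq_left hd0.le,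
    mul_div_assoc, div_self (mul_pos hb0 hd0).ne', mul_one]
  exact ⟨rfl, le_rfl⟩

/-- For the baker map and the cell C_j = [0,b_j)×[0,d_j) (a_j = c_j = 0), with initial
probability uniform on C_j, the occupation probability p_j(n) = P[φ^{-n}(C_j)] satisfies
p_j(n) = (1/2ⁿ)·ϑ(b_j − 2ⁿa_j)·ϑ(d_j − 2ⁿc_j)/((b_j−a_j)(d_j−c_j)) ≤ 1/2ⁿ
for n with 2ⁿ d_j < 1, where ϑ(x) = max(x,0). -/
theorem baker_occupation_decay (n : ℕ) (b d : ℝ)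
    (hb0 : 0 < b) (hb1 : b ≤ 1) (hd0 : 0 < d) (hd1 : d ≤ 1)
    (hn : (2 : ℝ) ^ n * d < 1)
    (C : Set (ℝ × ℝ)) (hC : C = Set.Ico (0 : ℝ) b ×ˢ Set.Ico (0 : ℝ) d) :
    (volume (baker^[n] ⁻¹' C ∩ C)).toReal / (volume C).toReal =
        (1 / 2 ^ n) * (max (b - 2 ^ n * 0) 0 * max (d - 2 ^ n * 0) 0) /
          ((b - 0) * (d - 0)) ∧
    (volume (baker^[n] ⁻¹' C ∩ C)).toReal / (volume C).toReal ≤ 1 / 2 ^ n :=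
  baker_occupation_decay_general n b d hb0 hb1 hd0 hn C hC
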